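/- arXiv:2310.02552 — 4 statements merged into one kernel-verified Lean document; each statement's English description precedes it below -/
import Mathlib

section
/- Let R > 0 and let r : ℝ × ℝ → ℝ be continuously differentiable, written r(θ,t) with partial derivatives r_θ and r_t, such that there is no point (θ,t) at which r, r_θ, and r_t all vanish simultaneously. On the open set U = {(x,y,z,u,w,t) ∈ ℝ⁶ : x² + y² > 0}, define h : U → ℝ² by h(x,y,z,u,w,t) = (x² + y² + z² - R², u² + w² - r(arctan(z/√(x²+y²)), t)). Then for every point p ∈ U with h(p) = (0,0), the derivative of h at p is a surjective linear map ℝ⁶ → ℝ² (i.e. the 2×6 Jacobian matrix of h at p has rank 2). -/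
open Real Filter Topology

/-!
Differentiating along the radial field `(x, y, z, 0, 0, 0)` changes only the first component of
`h`, at rate `2 (x² + y² + z²) ≠ 0`, because the latitude `arctan (z / √(x² + y²))` is invariant
under scaling. It then suffices to find one direction along which the second component has
non-zero derivative: on the zero set `u² + w² = r`, so either `u² + w² > 0` and scaling `(u, w)`
works, or `r = 0` and, by the non-vanishing hypothesis, moving `t` or `z` works.
-/

theorem surjective_of_map_eq_mk_zero_of_map_snd_ne_zero {K E F : Type*} [Field K]
    [AddCommGroup E] [Module K E] [FunLike F E (K × K)] [LinearMapClass F K E (K × K)]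
    (f : F) {v w : E} {a : K} (hv : f v = (a, 0)) (ha : a ≠ 0) (hw : (f w).2 ≠ 0) :
    Function.Surjective f := by
  rintro ⟨b, c⟩
  refine ⟨((b - c / (f w).2 * (f w).1) / a) • v + (c / (f w).2) • w, ?_⟩
  rw [map_add, map_smul, map_smul, hv]
  ext
  · simp only [Prod.fst_add, Prod.smul_fst, smul_eq_mul]
    field_simp
    ring
  · simp only [Prod.snd_add, Prod.smul_snd, smul_eq_mul, mul_zero, zero_add]
    exact div_mul_cancel₀ c hw

noncomputable def latitude (q : Fin 6 → ℝ) : ℝ := arctan (q 2 / √(q 0 ^ 2 + q 1 ^ 2))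

noncomputable def handleMap (R : ℝ) (r : ℝ → ℝ → ℝ) (q : Fin 6 → ℝ) : ℝ × ℝ :=
  (q 0 ^ 2 + q 1 ^ 2 + q 2 ^ 2 - R ^ 2, q 3 ^ 2 + q 4 ^ 2 - r (latitude q) (q 5))

def radial (q : Fin 6 → ℝ) : Fin 6 → ℝ := ![q 0, q 1, q 2, 0, 0, 0]

def fibreRadial (q : Fin 6 → ℝ) : Fin 6 → ℝ := ![0, 0, 0, q 3, q 4, 0]

theorem differentiableAt_latitude {q : Fin 6 → ℝ} (hq : 0 < q 0 ^ 2 + q 1 ^ 2) :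
    DifferentiableAt ℝ latitude q := by
  have hρ : √(q 0 ^ 2 + q 1 ^ 2) ≠ 0 := (sqrt_pos.2 hq).ne'
  have hz : DifferentiableAt ℝ (fun q : Fin 6 → ℝ => q 2 / √(q 0 ^ 2 + q 1 ^ 2)) q := by
    fun_prop (disch := first | exact hq.ne' | exact hρ)
  exact hz.arctan

theorem differentiableAt_handleMap {R : ℝ} {r : ℝ → ℝ → ℝ} {q : Fin 6 → ℝ}
    (hr : DifferentiableAt ℝ (fun p : ℝ × ℝ => r p.1 p.2) (latitude q, q 5))
    (hq : 0 < q 0 ^ 2 + q 1 ^ 2) : DifferentiableAt ℝ (handleMap R r) q := by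
  have hrq : DifferentiableAt ℝ (fun q : Fin 6 → ℝ => r (latitude q) (q 5)) q :=
    hr.comp (f := fun q => (latitude q, q 5)) q
      ((differentiableAt_latitude hq).prodMk (differentiableAt_apply 5 q))
  have hsphere : DifferentiableAt ℝ
      (fun q : Fin 6 → ℝ => q 0 ^ 2 + q 1 ^ 2 + q 2 ^ 2 - R ^ 2) q := by fun_prop
  have hfibre : DifferentiableAt ℝ (fun q : Fin 6 → ℝ => q 3 ^ 2 + q 4 ^ 2) q := by fun_prop
  exact hsphere.prodMk (hfibre.sub hrq)

theorem latitude_add_smul_radial (q : Fin 6 → ℝ) {s : ℝ} (hs : -1 < s) :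
    latitude (q + s • radial q) = latitude q := by
  have hs' : 0 < 1 + s := by linarith
  have hx : (q + s • radial q) 0 = (1 + s) * q 0 := by change q 0 + s * q 0 = _; ring
  have hy : (q + s • radial q) 1 = (1 + s) * q 1 := by change q 1 + s * q 1 = _; ring
  have hz : (q + s • radial q) 2 = (1 + s) * q 2 := by change q 2 + s * q 2 = _; ring
  simp only [latitude, hx, hy, hz, mul_pow, ← mul_add, sqrt_mul (sq_nonneg _), sqrt_sq hs'.le,
    mul_div_mul_left _ _ hs'.ne']

theorem hasDerivAt_one_add_sq_mul (a : ℝ) :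
    HasDerivAt (fun s : ℝ => (1 + s) ^ 2 * a) (2 * a) 0 := by
  simpa using (((hasDerivAt_id' (0 : ℝ)).const_add 1).pow 2).mul_const a

theorem hasLineDerivAt_handleMap_radial (R : ℝ) (r : ℝ → ℝ → ℝ) (q : Fin 6 → ℝ) :
    HasLineDerivAt ℝ (handleMap R r) (2 * (q 0 ^ 2 + q 1 ^ 2 + q 2 ^ 2), 0) q (radial q) := by
  have hfst_eq : (fun s : ℝ => (handleMap R r (q + s • radial q)).1) =
      fun s => (1 + s) ^ 2 * (q 0 ^ 2 + q 1 ^ 2 + q 2 ^ 2) - R ^ 2 := by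
    funext s
    simp only [handleMap, radial, Pi.add_apply, Pi.smul_apply, Matrix.cons_val, smul_eq_mul]
    ring
  have hsnd : (fun s : ℝ => (handleMap R r (q + s • radial q)).2) =ᶠ[𝓝 0]
      fun _ => (handleMap R r q).2 := by
    filter_upwards [Ioi_mem_nhds neg_one_lt_zero] with s hs
    simp only [handleMap, latitude_add_smul_radial q hs]
    simp [radial]
  have hfst : HasDerivAt (fun s : ℝ => (handleMap R r (q + s • radial q)).1)
      (2 * (q 0 ^ 2 + q 1 ^ 2 + q 2 ^ 2)) 0 := by
    rw [hfst_eq]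
    exact (hasDerivAt_one_add_sq_mul _).sub_const (R ^ 2)
  exact hfst.prodMk ((hasDerivAt_const _ _).congr_of_eventuallyEq hsnd)

theorem hasLineDerivAt_handleMap_fibreRadial (R : ℝ) (r : ℝ → ℝ → ℝ) (q : Fin 6 → ℝ) :
    HasLineDerivAt ℝ (handleMap R r) (0, 2 * (q 3 ^ 2 + q 4 ^ 2)) q (fibreRadial q) := by
  have hline : (fun s : ℝ => handleMap R r (q + s • fibreRadial q)) =
      fun s => ((handleMap R r q).1, (1 + s) ^ 2 * (q 3 ^ 2 + q 4 ^ 2) - r (latitude q) (q 5)) := by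
    funext s
    simp only [handleMap, latitude, Pi.add_apply, Pi.smul_apply, smul_eq_mul]
    simp only [fibreRadial, Matrix.cons_val, mul_zero, add_zero]
    congr 1
    ring
  unfold HasLineDerivAt
  rw [hline]
  exact (hasDerivAt_const _ _).prodMk ((hasDerivAt_one_add_sq_mul _).sub_const _)

theorem hasLineDerivAt_handleMap_time {R : ℝ} {r : ℝ → ℝ → ℝ} {rt : ℝ} {q : Fin 6 → ℝ}
    (hrt : HasDerivAt (fun t => r (latitude q) t) rt (q 5)) :
    HasLineDerivAt ℝ (handleMap R r) (0, -rt) q (Pi.single 5 1) := by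
  have hline : (fun s : ℝ => handleMap R r (q + s • Pi.single 5 1)) =
      fun s => ((handleMap R r q).1, q 3 ^ 2 + q 4 ^ 2 - r (latitude q) (q 5 + s)) := by
    funext s
    simp only [handleMap, latitude, Pi.add_apply, Pi.smul_apply, smul_eq_mul]
    simp
  unfold HasLineDerivAt
  rw [hline]
  exact (hasDerivAt_const _ _).prodMk
    ((HasDerivAt.comp_const_add (q 5) 0 (by rwa [add_zero])).const_sub _)

theorem hasLineDerivAt_handleMap_height {R : ℝ} {r : ℝ → ℝ → ℝ} {rθ : ℝ} {q : Fin 6 → ℝ}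
    (hrθ : HasDerivAt (fun θ => r θ (q 5)) rθ (latitude q)) :
    HasLineDerivAt ℝ (handleMap R r)
      (2 * q 2, -(rθ * (1 / (1 + (q 2 / √(q 0 ^ 2 + q 1 ^ 2)) ^ 2) * (1 / √(q 0 ^ 2 + q 1 ^ 2)))))
      q (Pi.single 2 1) := by
  have hline : (fun s : ℝ => handleMap R r (q + s • Pi.single 2 1)) =
      fun s => (q 0 ^ 2 + q 1 ^ 2 + (q 2 + s) ^ 2 - R ^ 2,
        q 3 ^ 2 + q 4 ^ 2 - r (arctan ((q 2 + s) / √(q 0 ^ 2 + q 1 ^ 2))) (q 5)) := by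
    funext s
    simp only [handleMap, latitude, Pi.add_apply, Pi.smul_apply, smul_eq_mul]
    simp
  set ρ := √(q 0 ^ 2 + q 1 ^ 2)
  have hθ : HasDerivAt (fun s => arctan ((q 2 + s) / ρ)) (1 / (1 + (q 2 / ρ) ^ 2) * (1 / ρ)) 0 := by
    simpa only [add_zero] using (((hasDerivAt_id' 0).const_add (q 2)).div_const ρ).arctan
  have hz : HasDerivAt (fun s => q 0 ^ 2 + q 1 ^ 2 + (q 2 + s) ^ 2 - R ^ 2) (2 * q 2) 0 := by
    simpa using
      ((((hasDerivAt_id' 0).const_add (q 2)).pow 2).const_add (q 0 ^ 2 + q 1 ^ 2)).sub_const (R ^ 2)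
  unfold HasLineDerivAt
  rw [hline]
  exact hz.prodMk ((HasDerivAt.comp_of_eq 0 hrθ hθ (by simp [latitude, ρ])).const_sub _)

theorem exists_hasLineDerivAt_handleMap_snd_ne_zero {R : ℝ} {r : ℝ → ℝ → ℝ} {rθ rt : ℝ}
    {q : Fin 6 → ℝ} (hq : 0 < q 0 ^ 2 + q 1 ^ 2)
    (hrθ : HasDerivAt (fun θ => r θ (q 5)) rθ (latitude q))
    (hrt : HasDerivAt (fun t => r (latitude q) t) rt (q 5))
    (hnv : ¬ (r (latitude q) (q 5) = 0 ∧ rθ = 0 ∧ rt = 0)) (hq0 : (handleMap R r q).2 = 0) :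
    ∃ v c, HasLineDerivAt ℝ (handleMap R r) c q v ∧ c.2 ≠ 0 := by
  rcases (add_nonneg (sq_nonneg (q 3)) (sq_nonneg (q 4))).lt_or_eq with hfibre | hfibre
  · exact ⟨_, _, hasLineDerivAt_handleMap_fibreRadial R r q, by positivity⟩
  have hr0 : r (latitude q) (q 5) = 0 := by
    rw [handleMap, ← hfibre, zero_sub, neg_eq_zero] at hq0
    exact hq0
  by_cases hrt0 : rt = 0
  · have hrθ0 : rθ ≠ 0 := fun hrθ0 => hnv ⟨hr0, hrθ0, hrt0⟩
    have hρ : 0 < √(q 0 ^ 2 + q 1 ^ 2) := sqrt_pos.2 hq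
    exact ⟨_, _, hasLineDerivAt_handleMap_height hrθ,
      neg_ne_zero.2 (mul_ne_zero hrθ0 (by positivity))⟩
  · exact ⟨_, _, hasLineDerivAt_handleMap_time hrt, neg_ne_zero.2 hrt0⟩

theorem stmt_1_general (R : ℝ) (r rθ rt : ℝ → ℝ → ℝ)
    (hr : ContDiff ℝ 1 (fun p : ℝ × ℝ => r p.1 p.2))
    (hrθ : ∀ θ t, HasDerivAt (fun θ' => r θ' t) (rθ θ t) θ)
    (hrt : ∀ θ t, HasDerivAt (fun t' => r θ t') (rt θ t) t)
    (hnv : ∀ θ t, ¬ (r θ t = 0 ∧ rθ θ t = 0 ∧ rt θ t = 0))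
    (h : (Fin 6 → ℝ) → ℝ × ℝ)
    (hh : ∀ p : Fin 6 → ℝ,
      h p = (p 0 ^ 2 + p 1 ^ 2 + p 2 ^ 2 - R ^ 2,
             p 3 ^ 2 + p 4 ^ 2
               - r (Real.arctan (p 2 / Real.sqrt (p 0 ^ 2 + p 1 ^ 2))) (p 5)))
    (p : Fin 6 → ℝ) (hpU : 0 < p 0 ^ 2 + p 1 ^ 2) (hp0 : h p = (0, 0)) :
    DifferentiableAt ℝ h p ∧ Function.Surjective (fderiv ℝ h p) := by
  obtain rfl : h = handleMap R r := funext hh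
  have hdiff : DifferentiableAt ℝ (handleMap R r) p :=
    differentiableAt_handleMap (hr.differentiable one_ne_zero).differentiableAt hpU
  have hfderiv {v : Fin 6 → ℝ} {c : ℝ × ℝ} (hc : HasLineDerivAt ℝ (handleMap R r) c p v) :
      fderiv ℝ (handleMap R r) p v = c :=
    hdiff.lineDeriv_eq_fderiv ▸ hc.lineDeriv
  obtain ⟨v, c, hc, hc2⟩ := exists_hasLineDerivAt_handleMap_snd_ne_zero hpU (hrθ _ _) (hrt _ _)
    (hnv _ _) (congrArg Prod.snd hp0)
  have hradial : 0 < 2 * (p 0 ^ 2 + p 1 ^ 2 + p 2 ^ 2) := by nlinarith [sq_nonneg (p 2)]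
  exact ⟨hdiff, surjective_of_map_eq_mk_zero_of_map_snd_ne_zero _
    (hfderiv (hasLineDerivAt_handleMap_radial R r p)) hradial.ne' (hfderiv hc ▸ hc2)⟩

/-- The defining map `h` of the handle-attachment cobordism has surjective
derivative (rank-2 Jacobian) at every zero of `h` with `x² + y² > 0`. -/
theorem stmt_1 (R : ℝ) (hR : 0 < R) (r rθ rt : ℝ → ℝ → ℝ)
    (hr : ContDiff ℝ 1 (fun p : ℝ × ℝ => r p.1 p.2))
    (hrθ : ∀ θ t, HasDerivAt (fun θ' => r θ' t) (rθ θ t) θ)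
    (hrt : ∀ θ t, HasDerivAt (fun t' => r θ t') (rt θ t) t)
    (hnv : ∀ θ t, ¬ (r θ t = 0 ∧ rθ θ t = 0 ∧ rt θ t = 0))
    (h : (Fin 6 → ℝ) → ℝ × ℝ)
    (hh : ∀ p : Fin 6 → ℝ,
      h p = (p 0 ^ 2 + p 1 ^ 2 + p 2 ^ 2 - R ^ 2,
             p 3 ^ 2 + p 4 ^ 2
               - r (Real.arctan (p 2 / Real.sqrt (p 0 ^ 2 + p 1 ^ 2))) (p 5)))
    (p : Fin 6 → ℝ) (hpU : 0 < p 0 ^ 2 + p 1 ^ 2) (hp0 : h p = (0, 0)) :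
    DifferentiableAt ℝ h p ∧ Function.Surjective (fderiv ℝ h p) :=
  stmt_1_general R r rθ rt hr hrθ hrt hnv h hh p hpU hp0
end

section
/- Let r, R > 0, let θ ∈ ℝ with cos θ ≠ 0, and let r_t, r_θ ∈ ℝ be arbitrary. Then the symmetric 4×4 matrix g with rows [[R² + r_θ²/(4r), 0, r_t·r_θ/(4r), 0], [0, R² cos²θ, 0, 0], [r_t·r_θ/(4r), 0, 1 + r_t²/(4r), 0], [0, 0, 0, r]] is positive definite, and its determinant equals cos²θ · (r·R⁴ + R²·(R²·r_t² + r_θ²)/4) > 0. -/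
/-!
Since `d(√r) = dr / (2√r)` and `dr = r_θ dθ + r_t dt`, the induced metric is
`R² dθ² + R² cos²θ dφ² + dt² + r dα² + (r_θ dθ + r_t dt)² / (4r)`: a positive diagonal matrix
plus the positive semidefinite rank-one matrix `(4r)⁻¹ v vᵀ` with `v = (r_θ, 0, r_t, 0)`.
This makes it positive definite, and the matrix determinant lemma gives
`det g = R⁴ cos²θ r (1 + (r_θ² / R² + r_t²) / (4r))`.
-/

open Real Matrix

theorem Matrix.det_diagonal_add_vecMulVec {n K : Type*} [Fintype n] [DecidableEq n] [Field K]
    {d : n → K} (hd : ∀ i, d i ≠ 0) (u v : n → K) :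
    (diagonal d + vecMulVec u v).det = (∏ i, d i) * (1 + ∑ i, u i * v i / d i) := by
  have hunit : IsUnit (diagonal d).det := by
    simpa [det_diagonal] using Finset.prod_ne_zero_iff.mpr fun i _ => hd i
  have hinv : (diagonal d)⁻¹ = diagonal fun i => (d i)⁻¹ :=
    inv_eq_left_inv <| by simp [diagonal_mul_diagonal, inv_mul_cancel₀ (hd _)]
  rw [vecMulVec_eq Unit, det_add_replicateCol_mul_replicateRow hunit, det_diagonal, det_unique,
    hinv, ← replicateRow_vecMul, add_apply, one_apply_eq, replicateRow_mul_replicateCol_apply]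
  simp only [dotProduct, vecMul_diagonal]
  congr 2
  exact Finset.sum_congr rfl fun i _ => by ring

theorem Matrix.posDef_diagonal_add_smul_vecMulVec {n : Type*} [Fintype n] [DecidableEq n]
    {d : n → ℝ} (hd : ∀ i, 0 < d i) {c : ℝ} (hc : 0 ≤ c) (v : n → ℝ) :
    (diagonal d + c • vecMulVec v v).PosDef :=
  (posDef_diagonal_iff.mpr hd).add_posSemidef ((posSemidef_vecMulVec_self_star v).smul hc)

theorem handleMetric_eq_diagonal_add_smul_vecMulVec (r R θ rt rθ : ℝ) :
    !![R ^ 2 + rθ ^ 2 / (4 * r), 0, rt * rθ / (4 * r), 0;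
       0, R ^ 2 * Real.cos θ ^ 2, 0, 0;
       rt * rθ / (4 * r), 0, 1 + rt ^ 2 / (4 * r), 0;
       0, 0, 0, r] =
      diagonal ![R ^ 2, R ^ 2 * Real.cos θ ^ 2, 1, r] +
        (4 * r)⁻¹ • vecMulVec ![rθ, 0, rt, 0] ![rθ, 0, rt, 0] := by
  ext i j
  fin_cases i <;> fin_cases j <;> simp [vecMulVec] <;> ring

/-- The induced metric tensor `g` in coordinates `(θ, φ, t, α)` is positive
definite, with determinant `cos²θ · (r·R⁴ + R²·(R²·r_t² + r_θ²)/4) > 0`. -/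
theorem stmt_5 (r R θ rt rθ : ℝ) (hr : 0 < r) (hR : 0 < R)
    (hcos : Real.cos θ ≠ 0) :
    let g : Matrix (Fin 4) (Fin 4) ℝ :=
      !![R ^ 2 + rθ ^ 2 / (4 * r), 0, rt * rθ / (4 * r), 0;
         0, R ^ 2 * Real.cos θ ^ 2, 0, 0;
         rt * rθ / (4 * r), 0, 1 + rt ^ 2 / (4 * r), 0;
         0, 0, 0, r]
    g.PosDef ∧
    g.det = Real.cos θ ^ 2 * (r * R ^ 4 + R ^ 2 * (R ^ 2 * rt ^ 2 + rθ ^ 2) / 4) ∧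
    0 < g.det := by
  intro g
  have hd : ∀ i, 0 < ![R ^ 2, R ^ 2 * Real.cos θ ^ 2, 1, r] i := by
    intro i
    fin_cases i <;> simp <;> positivity
  have hg : g = diagonal _ + (4 * r)⁻¹ • vecMulVec ![rθ, 0, rt, 0] ![rθ, 0, rt, 0] :=
    handleMetric_eq_diagonal_add_smul_vecMulVec r R θ rt rθ
  have hpos : g.PosDef := hg ▸ posDef_diagonal_add_smul_vecMulVec hd (by positivity) _
  have hdet : g.det = Real.cos θ ^ 2 * (r * R ^ 4 + R ^ 2 * (R ^ 2 * rt ^ 2 + rθ ^ 2) / 4) := by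
    rw [hg, ← vecMulVec_smul, det_diagonal_add_vecMulVec fun i => (hd i).ne']
    simp [Fin.prod_univ_four, Fin.sum_univ_four]
    field_simp
    ring
  exact ⟨hpos, hdet, hpos.det_pos⟩
end

section
/- Let f : ℝ → ℝ be defined by f(y) = exp(-1/y - 1/(1-y)) for y ∈ (0,1) and f(y) = 0 otherwise. Then (∫₀ˣ f(y) dy) / (f(x)·x²) tends to 1 as x tends to 0 from the right. -/
/-!
Both `∫₀ˣ f` and `f(x)·x²` tend to `0` as `x → 0⁺`, so L'Hôpital's rule applies on `(0, 1/2)`.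
Since `(log f)'(x) = 1/x² - 1/(1-x)²`, the derivative of `f(x)·x²` is
`f(x)·(1 - (x/(1-x))² + 2x)`, and the quotient of the derivatives is
`1 / (1 - (x/(1-x))² + 2x) → 1`.
-/

open Real Filter Set

noncomputable section

def expBump (y : ℝ) : ℝ :=
  if y ∈ Ioo (0 : ℝ) 1 then exp (-1 / y - 1 / (1 - y)) else 0

namespace expBump

lemma nonneg (y : ℝ) : 0 ≤ expBump y := by
  unfold expBump
  split_ifs
  exacts [(exp_pos _).le, le_rfl]

lemma le_one (y : ℝ) : expBump y ≤ 1 := by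
  unfold expBump
  split_ifs with hy
  · obtain ⟨hy0, hy1⟩ := hy
    have h0 : 0 ≤ 1 / y := by positivity
    have h1 : 0 ≤ 1 / (1 - y) := one_div_nonneg.mpr (by linarith)
    exact exp_le_one_iff.mpr (by rw [neg_div]; linarith)
  · exact zero_le_one

lemma eq_exp {y : ℝ} (hy : y ∈ Ioo (0 : ℝ) 1) : expBump y = exp (-1 / y - 1 / (1 - y)) :=
  if_pos hy

lemma pos {y : ℝ} (hy : y ∈ Ioo (0 : ℝ) 1) : 0 < expBump y := by
  rw [eq_exp hy]
  exact exp_pos _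

lemma eventuallyEq_exp {x : ℝ} (hx : x ∈ Ioo (0 : ℝ) 1) :
    expBump =ᶠ[nhds x] fun y => exp (-1 / y - 1 / (1 - y)) := by
  filter_upwards [isOpen_Ioo.mem_nhds hx] with y hy using eq_exp hy

lemma measurable : Measurable expBump :=
  Measurable.ite measurableSet_Ioo
    (measurable_exp.comp ((measurable_const.div measurable_id).sub
      (measurable_const.div (measurable_const.sub measurable_id)))) measurable_const

lemma intervalIntegrable (a b : ℝ) : IntervalIntegrable expBump MeasureTheory.volume a b := by
  rw [intervalIntegrable_iff]
  refine MeasureTheory.Measure.integrableOn_of_bounded (M := 1) measure_Ioc_lt_top.ne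
    measurable.aestronglyMeasurable (Eventually.of_forall fun y => ?_)
  rw [norm_of_nonneg (nonneg y)]
  exact le_one y

lemma continuousAt {x : ℝ} (hx : x ∈ Ioo (0 : ℝ) 1) : ContinuousAt expBump x := by
  refine ContinuousAt.congr ?_ (eventuallyEq_exp hx).symm
  have hx1 : 1 - x ≠ 0 := by linarith [hx.2]
  fun_prop (disch := first | exact hx.1.ne' | exact hx1)

lemma hasDerivAt_integral {x : ℝ} (hx : x ∈ Ioo (0 : ℝ) 1) :
    HasDerivAt (fun u => ∫ y in (0 : ℝ)..u, expBump y) (expBump x) x :=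
  intervalIntegral.integral_hasDerivAt_right (intervalIntegrable 0 x)
    measurable.stronglyMeasurable.stronglyMeasurableAtFilter (continuousAt hx)

lemma hasDerivAt_exponent {x : ℝ} (hx : x ∈ Ioo (0 : ℝ) 1) :
    HasDerivAt (fun y => -1 / y - 1 / (1 - y)) (1 / x ^ 2 - 1 / (1 - x) ^ 2) x := by
  have hx1 : 1 - x ≠ 0 := by linarith [hx.2]
  have h : HasDerivAt (fun y => -y⁻¹ - (1 - y)⁻¹) (-(-(x ^ 2)⁻¹) - (-(-1) / (1 - x) ^ 2)) x :=
    (hasDerivAt_inv hx.1.ne').fun_neg.fun_sub (((hasDerivAt_id x).const_sub 1).fun_inv hx1)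
  convert h using 1
  · ext y; simp [neg_div]
  · ring

def mulSqFactor (x : ℝ) : ℝ := 1 - (x / (1 - x)) ^ 2 + 2 * x

lemma hasDerivAt_mul_sq {x : ℝ} (hx : x ∈ Ioo (0 : ℝ) 1) :
    HasDerivAt (fun y => expBump y * y ^ 2) (expBump x * mulSqFactor x) x := by
  have hx1 : 1 - x ≠ 0 := by linarith [hx.2]
  have h := ((hasDerivAt_exponent hx).exp.fun_mul (hasDerivAt_pow 2 x)).congr_of_eventuallyEq
    ((eventuallyEq_exp hx).fun_mul (EventuallyEq.refl _ fun y : ℝ => y ^ 2))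
  refine h.congr_deriv ?_
  rw [eq_exp hx, mulSqFactor]
  have hx0 : x ≠ 0 := hx.1.ne'
  field_simp
  ring

lemma mulSqFactor_pos {x : ℝ} (hx : x ∈ Ioo (0 : ℝ) (1 / 2)) : 0 < mulSqFactor x := by
  obtain ⟨hx0, hx1⟩ := hx
  have hq0 : 0 < x / (1 - x) := div_pos hx0 (by linarith)
  have hq1 : x / (1 - x) < 1 := (div_lt_one (by linarith)).mpr (by linarith)
  unfold mulSqFactor
  nlinarith

lemma tendsto_inv_mulSqFactor :
    Tendsto (fun x => (mulSqFactor x)⁻¹) (nhdsWithin 0 (Ioi 0)) (nhds 1) := by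
  have hcont : ContinuousAt (fun x => (mulSqFactor x)⁻¹) 0 := by
    unfold mulSqFactor
    fun_prop (disch := norm_num)
  simpa [mulSqFactor] using hcont.tendsto.mono_left nhdsWithin_le_nhds

end expBump

/-- For the bump function `f(y) = exp(-1/y - 1/(1-y))` on `(0,1)` (zero
elsewhere): `(∫₀ˣ f)/(f(x)·x²) → 1` as `x → 0⁺`. -/
theorem stmt_12 (f : ℝ → ℝ)
    (hf : ∀ y, f y = if y ∈ Set.Ioo (0 : ℝ) 1
      then Real.exp (-1 / y - 1 / (1 - y)) else 0) :
    Filter.Tendsto (fun x => (∫ y in (0 : ℝ)..x, f y) / (f x * x ^ 2))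
      (nhdsWithin 0 (Set.Ioi 0)) (nhds 1) := by
  obtain rfl : f = expBump := funext hf
  have hsub : Ioo (0 : ℝ) (1 / 2) ⊆ Ioo 0 1 := Ioo_subset_Ioo_right (by norm_num)
  have hint : Tendsto (fun x => ∫ y in (0 : ℝ)..x, expBump y) (nhdsWithin 0 (Ioi 0)) (nhds 0) := by
    simpa using ((intervalIntegral.continuous_primitive expBump.intervalIntegrable 0).tendsto 0
      ).mono_left nhdsWithin_le_nhds
  have hsq : Tendsto (fun x => expBump x * x ^ 2) (nhdsWithin 0 (Ioi 0)) (nhds 0) := by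
    refine squeeze_zero (fun x => mul_nonneg (expBump.nonneg x) (sq_nonneg x))
      (fun x => mul_le_of_le_one_left (sq_nonneg x) (expBump.le_one x)) ?_
    simpa using ((continuous_pow 2).tendsto (0 : ℝ)).mono_left nhdsWithin_le_nhds
  refine HasDerivAt.lhopital_zero_right_on_Ioo (by norm_num)
    (fun x hx => expBump.hasDerivAt_integral (hsub hx))
    (fun x hx => expBump.hasDerivAt_mul_sq (hsub hx))
    (fun x hx => (mul_pos (expBump.pos (hsub hx)) (expBump.mulSqFactor_pos hx)).ne') hint hsq
    (expBump.tendsto_inv_mulSqFactor.congr' ?_)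
  filter_upwards [Ioo_mem_nhdsGT (by norm_num : (0 : ℝ) < 1 / 2)] with x hx
  rw [div_mul_cancel_left₀ (expBump.pos (hsub hx)).ne']

end
end

section
/- Let R > 0 and let r : ℝ × ℝ → ℝ be differentiable, written r(θ,t) with partial derivatives r_θ and r_t. Define G : ℝ⁴ → ℝ⁶ by G(θ, φ, t, a) = (cos θ cos φ, cos θ sin φ, sin θ, (√(r(θ,t))/R)·cos(R·a), (√(r(θ,t))/R)·sin(R·a), t). At any point (θ, φ, t, a) with r(θ,t) > 0, the Euclidean inner products of the partial derivatives of G are: ⟨∂G/∂θ, ∂G/∂θ⟩ = 1 + r_θ²/(4·r·R²); ⟨∂G/∂φ, ∂G/∂φ⟩ = cos²θ; ⟨∂G/∂t, ∂G/∂t⟩ = 1 + r_t²/(4·r·R²); ⟨∂G/∂a, ∂G/∂a⟩ = r; ⟨∂G/∂θ, ∂G/∂t⟩ = r_t·r_θ/(4·r·R²); and all other pairs of distinct partial derivatives are orthogonal. -/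
/-!
The partial derivatives of `G` are computed coordinatewise; the chain rule for `√r` contributes
`r_θ / (2√r)` and `r_t / (2√r)` to the two circle coordinates. The inner products then reduce to
`sin² + cos² = 1` (for `θ`, `φ` and `R a`) together with `(√r)² = r`.
-/

open Real

theorem HasDerivAt.toLp {𝕜 ι : Type*} [NontriviallyNormedField 𝕜] [Fintype ι] {E : ι → Type*}
    [∀ i, NormedAddCommGroup (E i)] [∀ i, NormedSpace 𝕜 (E i)] (p : ENNReal) [Fact (1 ≤ p)]
    {f : 𝕜 → ∀ i, E i} {f' : ∀ i, E i} {x : 𝕜} (h : HasDerivAt f f' x) :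
    HasDerivAt (fun y => WithLp.toLp p (f y)) (WithLp.toLp p f') x :=
  (PiLp.hasFDerivAt_toLp p (f x)).comp_hasDerivAt x h

section VecCons

variable {𝕜 F : Type*} [NontriviallyNormedField 𝕜] [NormedAddCommGroup F] [NormedSpace 𝕜 F]
  {x : 𝕜}

theorem hasDerivAt_vecEmpty : HasDerivAt (fun _ => (![] : Fin 0 → F)) ![] x :=
  (hasDerivAt_const x _).congr_deriv (Subsingleton.elim _ _)

theorem HasDerivAt.vecCons {n : ℕ} {f : 𝕜 → F} {g : 𝕜 → Fin n → F} {v : F} {w : Fin n → F}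
    (hf : HasDerivAt f v x) (hg : HasDerivAt g w x) :
    HasDerivAt (fun y => Matrix.vecCons (f y) (g y)) (Matrix.vecCons v w) x := by
  rw [hasDerivAt_pi] at hg ⊢
  exact Fin.cases hf hg

end VecCons

noncomputable def warpedChart (R : ℝ) (r : ℝ → ℝ → ℝ) (θ φ t a : ℝ) : EuclideanSpace ℝ (Fin 6) :=
  WithLp.toLp 2 ![cos θ * cos φ, cos θ * sin φ, sin θ,
    √(r θ t) / R * cos (R * a), √(r θ t) / R * sin (R * a), t]

section WarpedChart

variable {R : ℝ} {r : ℝ → ℝ → ℝ} {θ φ t a : ℝ}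

theorem hasDerivAt_warpedChart_θ {ρ : ℝ} (hr : HasDerivAt (fun x => r x t) ρ θ)
    (hr0 : r θ t ≠ 0) :
    HasDerivAt (fun x => warpedChart R r x φ t a)
      (WithLp.toLp 2 ![-sin θ * cos φ, -sin θ * sin φ, cos θ,
        ρ / (2 * √(r θ t)) / R * cos (R * a), ρ / (2 * √(r θ t)) / R * sin (R * a), 0]) θ := by
  have hsqrt := (hr.sqrt hr0).div_const R
  exact HasDerivAt.toLp 2 <| ((hasDerivAt_cos θ).mul_const _).vecCons <|
    ((hasDerivAt_cos θ).mul_const _).vecCons <| (hasDerivAt_sin θ).vecCons <|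
    (hsqrt.mul_const _).vecCons <| (hsqrt.mul_const _).vecCons <|
    (hasDerivAt_const θ t).vecCons hasDerivAt_vecEmpty

theorem hasDerivAt_warpedChart_φ :
    HasDerivAt (fun x => warpedChart R r θ x t a)
      (WithLp.toLp 2 ![cos θ * -sin φ, cos θ * cos φ, 0, 0, 0, 0]) φ :=
  HasDerivAt.toLp 2 <| ((hasDerivAt_cos φ).const_mul _).vecCons <|
    ((hasDerivAt_sin φ).const_mul _).vecCons <| (hasDerivAt_const φ _).vecCons <|
    (hasDerivAt_const φ _).vecCons <| (hasDerivAt_const φ _).vecCons <|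
    (hasDerivAt_const φ _).vecCons hasDerivAt_vecEmpty

theorem hasDerivAt_warpedChart_t {ρ : ℝ} (hr : HasDerivAt (fun x => r θ x) ρ t)
    (hr0 : r θ t ≠ 0) :
    HasDerivAt (fun x => warpedChart R r θ φ x a)
      (WithLp.toLp 2 ![0, 0, 0,
        ρ / (2 * √(r θ t)) / R * cos (R * a), ρ / (2 * √(r θ t)) / R * sin (R * a), 1]) t := by
  have hsqrt := (hr.sqrt hr0).div_const R
  exact HasDerivAt.toLp 2 <| (hasDerivAt_const t _).vecCons <|
    (hasDerivAt_const t _).vecCons <| (hasDerivAt_const t _).vecCons <|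
    (hsqrt.mul_const _).vecCons <| (hsqrt.mul_const _).vecCons <|
    (hasDerivAt_id t).vecCons hasDerivAt_vecEmpty

theorem hasDerivAt_warpedChart_a (hR : R ≠ 0) :
    HasDerivAt (fun x => warpedChart R r θ φ t x)
      (WithLp.toLp 2 ![0, 0, 0, -(√(r θ t) * sin (R * a)), √(r θ t) * cos (R * a), 0]) a := by
  have hRa : HasDerivAt (fun x => R * x) R a := hasDerivAt_const_mul R
  refine (HasDerivAt.toLp 2 <| (hasDerivAt_const a _).vecCons <|
    (hasDerivAt_const a _).vecCons <| (hasDerivAt_const a _).vecCons <|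
    (hRa.cos.const_mul _).vecCons <| (hRa.sin.const_mul _).vecCons <|
    (hasDerivAt_const a _).vecCons hasDerivAt_vecEmpty).congr_deriv ?_
  field_simp

end WarpedChart

/-- The repackaged metric (base sphere of radius 1): Euclidean inner products
of the partial derivatives of
`G(θ,φ,t,a) = (cosθ cosφ, cosθ sinφ, sinθ, (√r/R)cos(Ra), (√r/R)sin(Ra), t)`. -/
theorem stmt_19 (R : ℝ) (hR : 0 < R) (r rθ rt : ℝ → ℝ → ℝ)
    (hrθ : ∀ θ t, HasDerivAt (fun θ' => r θ' t) (rθ θ t) θ)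
    (hrt : ∀ θ t, HasDerivAt (fun t' => r θ t') (rt θ t) t)
    (G : ℝ → ℝ → ℝ → ℝ → EuclideanSpace ℝ (Fin 6))
    (hG : ∀ θ φ t a, G θ φ t a = (WithLp.equiv 2 (Fin 6 → ℝ)).symm
      ![Real.cos θ * Real.cos φ, Real.cos θ * Real.sin φ, Real.sin θ,
        (Real.sqrt (r θ t) / R) * Real.cos (R * a),
        (Real.sqrt (r θ t) / R) * Real.sin (R * a), t])
    (θ φ t a : ℝ) (hpos : 0 < r θ t) :
    (inner ℝ (deriv (fun x => G x φ t a) θ) (deriv (fun x => G x φ t a) θ) : ℝ)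
        = 1 + (rθ θ t) ^ 2 / (4 * r θ t * R ^ 2) ∧
    (inner ℝ (deriv (fun x => G θ x t a) φ) (deriv (fun x => G θ x t a) φ) : ℝ)
        = Real.cos θ ^ 2 ∧
    (inner ℝ (deriv (fun x => G θ φ x a) t) (deriv (fun x => G θ φ x a) t) : ℝ)
        = 1 + (rt θ t) ^ 2 / (4 * r θ t * R ^ 2) ∧
    (inner ℝ (deriv (fun x => G θ φ t x) a) (deriv (fun x => G θ φ t x) a) : ℝ)
        = r θ t ∧
    (inner ℝ (deriv (fun x => G x φ t a) θ) (deriv (fun x => G θ φ x a) t) : ℝ)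
        = rt θ t * rθ θ t / (4 * r θ t * R ^ 2) ∧
    (inner ℝ (deriv (fun x => G x φ t a) θ) (deriv (fun x => G θ x t a) φ) : ℝ) = 0 ∧
    (inner ℝ (deriv (fun x => G x φ t a) θ) (deriv (fun x => G θ φ t x) a) : ℝ) = 0 ∧
    (inner ℝ (deriv (fun x => G θ x t a) φ) (deriv (fun x => G θ φ x a) t) : ℝ) = 0 ∧
    (inner ℝ (deriv (fun x => G θ x t a) φ) (deriv (fun x => G θ φ t x) a) : ℝ) = 0 ∧
    (inner ℝ (deriv (fun x => G θ φ x a) t) (deriv (fun x => G θ φ t x) a) : ℝ) = 0 := by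
  obtain rfl : G = warpedChart R r := by funext θ φ t a; exact hG θ φ t a
  rw [(hasDerivAt_warpedChart_θ (hrθ θ t) hpos.ne').deriv, hasDerivAt_warpedChart_φ.deriv,
    (hasDerivAt_warpedChart_t (hrt θ t) hpos.ne').deriv, (hasDerivAt_warpedChart_a hR.ne').deriv]
  simp only [EuclideanSpace.inner_toLp_toLp, Matrix.cons_dotProduct_cons,
    Matrix.dotProduct_of_isEmpty, star_trivial]
  set s := √(r θ t)
  have hs : s ^ 2 = r θ t := sq_sqrt hpos.le
  rw [← hs]
  have hθ := sin_sq_add_cos_sq θ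
  have hφ := sin_sq_add_cos_sq φ
  have hRa := sin_sq_add_cos_sq (R * a)
  refine ⟨?_, ?_, ?_, ?_, ?_, ?_, ?_, ?_, ?_, ?_⟩
  · linear_combination sin θ ^ 2 * hφ + hθ + (rθ θ t / (2 * s) / R) ^ 2 * hRa
  · linear_combination cos θ ^ 2 * hφ
  · linear_combination (rt θ t / (2 * s) / R) ^ 2 * hRa
  · linear_combination s ^ 2 * hRa
  · linear_combination (rθ θ t / (2 * s) / R) * (rt θ t / (2 * s) / R) * hRa
  all_goals ring
end
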